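/- arXiv:0905.4651 — 6 statements merged into one kernel-verified Lean document; each statement's English description precedes it below -/
import Mathlib

section
/- The group H acts transitively on the set of single-centered BPS charge vectors: for every pair of vectors v, w ∈ B there exists g ∈ H with g·v = w. -/
open Matrix NormedSpace

noncomputable section

/-- The generator `b₁` of (the image of) K* in SO(2,2). -/
def b1 : Matrix (Fin 4) (Fin 4) ℝ := !![0,-1,0,0; 1,0,0,0; 0,0,0,1; 0,0,-1,0]

/-- The generator `b₂`. -/
def b2 : Matrix (Fin 4) (Fin 4) ℝ := !![0,0,-1,0; 0,0,0,-1; -1,0,0,0; 0,-1,0,0]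

/-- The generator `b₃`. -/
def b3 : Matrix (Fin 4) (Fin 4) ℝ := !![0,0,0,1; 0,0,-1,0; 0,-1,0,0; 1,0,0,0]

/-- The generator `b₄`. -/
def b4 : Matrix (Fin 4) (Fin 4) ℝ := !![0,1,0,0; -1,0,0,0; 0,0,0,1; 0,0,-1,0]

/-- The quadratic form `Δ²(m,n,q,h) = m² + n² − q² − h²`. -/
def Δsq (v : Fin 4 → ℝ) : ℝ := v 0 ^ 2 + v 1 ^ 2 - v 2 ^ 2 - v 3 ^ 2

/-- The set of single-centered BPS charge vectors. -/
def B : Set (Fin 4 → ℝ) := {v | v ≠ 0 ∧ Δsq v = 0}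

/-- The subgroup `H` of `GL(4,ℝ)` generated by the one-parameter groups `exp(t bᵢ)`,
`i = 1,2,3,4`. -/
def H : Subgroup (GL (Fin 4) ℝ) :=
  Subgroup.closure {g : GL (Fin 4) ℝ | ∃ t : ℝ,
    (g : Matrix (Fin 4) (Fin 4) ℝ) = exp (t • b1) ∨
    (g : Matrix (Fin 4) (Fin 4) ℝ) = exp (t • b2) ∨
    (g : Matrix (Fin 4) (Fin 4) ℝ) = exp (t • b3) ∨
    (g : Matrix (Fin 4) (Fin 4) ℝ) = exp (t • b4)}

/-!
A vector of `B` is a pair of plane vectors `(m,n)`, `(q,h)` of the same length `r > 0`.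
`exp (t b₁)` rotates the two planes by opposite angles and `exp (t b₄)` rotates both by the same
angle, so together they bring `v` to `(r,0,r,0)`. This is an eigenvector of `b₂` with
eigenvalue `-1`, so `exp (log r · b₂)` rescales it to `(1,0,1,0)`. Every vector of `B` thus
lies in the `H`-orbit of `(1,0,1,0)`.
-/

theorem exp_smul_of_mul_self_eq_neg_one {𝔸 : Type*} [NormedRing 𝔸] [NormedAlgebra ℝ 𝔸] {J : 𝔸}
    (hJ : J * J = -1) (t : ℝ) :
    exp (t • J) = Real.cos t • 1 + Real.sin t • J := by
  -- `map_exp` wants the target to be a `ℚ`-algebra.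
  let _ : Algebra ℚ 𝔸 := RestrictScalars.algebra ℚ ℝ 𝔸
  have hJ_cont : Continuous (Complex.liftAux J hJ) :=
    (Complex.liftAux J hJ).toLinearMap.continuous_of_finiteDimensional
  have := map_exp _ hJ_cont ((t : ℂ) * Complex.I)
  rw [← Complex.exp_eq_exp_ℂ, Complex.exp_mul_I, ← Complex.ofReal_cos,
    ← Complex.ofReal_sin] at this
  simpa [Complex.liftAux_apply, Algebra.algebraMap_eq_smul_one, Complex.cos_ofReal_re,
    Complex.sin_ofReal_re] using this.symm

open scoped Norms.Operator in
theorem Matrix.exp_mulVec_of_mulVec_eq_smul {𝕂 m : Type*} [RCLike 𝕂] [Fintype m]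
    [DecidableEq m] {A : Matrix m m 𝕂} {v : m → 𝕂} {c : 𝕂} (h : A *ᵥ v = c • v) :
    exp A *ᵥ v = exp c • v := by
  have hpow (n : ℕ) : A ^ n *ᵥ v = c ^ n • v := by
    induction n with
    | zero => simp
    | succ n ih => rw [pow_succ', ← mulVec_mulVec, ih, mulVec_smul, h, smul_smul, pow_succ]
  let mulVecRight : Matrix m m 𝕂 →+ (m → 𝕂) :=
    ⟨⟨fun M => M *ᵥ v, zero_mulVec v⟩, fun M N => add_mulVec M N v⟩
  have hA := (exp_series_hasSum_exp' (𝕂 := 𝕂) A).map mulVecRight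
    (continuous_id.matrix_mulVec continuous_const)
  refine hA.unique ?_
  convert (exp_series_hasSum_exp' (𝕂 := 𝕂) c).smul_const v using 2 with n
  simp [mulVecRight, smul_mulVec, hpow, smul_smul]

theorem Real.exists_eq_mul_cos_and_eq_mul_sin {x y r : ℝ} (hr : 0 ≤ r)
    (h : x ^ 2 + y ^ 2 = r ^ 2) : ∃ a : ℝ, x = r * Real.cos a ∧ y = r * Real.sin a := by
  have hnorm : ‖(⟨x, y⟩ : ℂ)‖ = r := by
    rw [Complex.norm_eq_sqrt_sq_add_sq, h, Real.sqrt_sq hr]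
  exact ⟨Complex.arg ⟨x, y⟩, by rw [← hnorm, Complex.norm_mul_cos_arg],
    by rw [← hnorm, Complex.norm_mul_sin_arg]⟩

theorem b1_mul_b1 : b1 * b1 = -1 := by
  ext i j
  fin_cases i <;> fin_cases j <;> simp [b1, mul_apply, Fin.sum_univ_four]

theorem b4_mul_b4 : b4 * b4 = -1 := by
  ext i j
  fin_cases i <;> fin_cases j <;> simp [b4, mul_apply, Fin.sum_univ_four]

open scoped Norms.Operator in
theorem exp_smul_b1 (t : ℝ) : exp (t • b1) = Real.cos t • 1 + Real.sin t • b1 :=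
  exp_smul_of_mul_self_eq_neg_one b1_mul_b1 t

open scoped Norms.Operator in
theorem exp_smul_b4 (t : ℝ) : exp (t • b4) = Real.cos t • 1 + Real.sin t • b4 :=
  exp_smul_of_mul_self_eq_neg_one b4_mul_b4 t

def polarVec (r a b : ℝ) : Fin 4 → ℝ :=
  ![r * Real.cos a, r * Real.sin a, r * Real.cos b, r * Real.sin b]

theorem exp_smul_b1_mulVec_polarVec (t r a b : ℝ) :
    exp (t • b1) *ᵥ polarVec r a b = polarVec r (a + t) (b - t) := by
  rw [exp_smul_b1, add_mulVec, smul_mulVec, smul_mulVec, one_mulVec]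
  ext i
  fin_cases i <;>
    simp [polarVec, b1, Real.cos_add, Real.sin_add, Real.cos_sub, Real.sin_sub] <;> ring

theorem exp_smul_b4_mulVec_polarVec (t r a b : ℝ) :
    exp (t • b4) *ᵥ polarVec r a b = polarVec r (a - t) (b - t) := by
  rw [exp_smul_b4, add_mulVec, smul_mulVec, smul_mulVec, one_mulVec]
  ext i
  fin_cases i <;>
    simp [polarVec, b4, Real.cos_sub, Real.sin_sub] <;> ring

theorem exp_smul_b2_mulVec_polarVec_zero (t r : ℝ) :
    exp (t • b2) *ᵥ polarVec r 0 0 = polarVec (Real.exp (-t) * r) 0 0 := by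
  have h : (t • b2) *ᵥ polarVec r 0 0 = (-t) • polarVec r 0 0 := by
    ext i
    fin_cases i <;> simp [polarVec, b2, mul_comm]
  rw [exp_mulVec_of_mulVec_eq_smul h, ← Real.exp_eq_exp_ℝ]
  ext i
  fin_cases i <;> simp [polarVec]

section expGL

variable {m : Type*} [Fintype m] [DecidableEq m]

def expGL (A : Matrix m m ℝ) : GL m ℝ := (isUnit_exp A).unit

theorem coe_expGL (A : Matrix m m ℝ) : (expGL A : Matrix m m ℝ) = exp A :=
  (isUnit_exp A).unit_spec

end expGL

theorem expGL_smul_b1_mem_H (t : ℝ) : expGL (t • b1) ∈ H :=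
  Subgroup.subset_closure ⟨t, .inl (coe_expGL _)⟩

theorem expGL_smul_b2_mem_H (t : ℝ) : expGL (t • b2) ∈ H :=
  Subgroup.subset_closure ⟨t, .inr (.inl (coe_expGL _))⟩

theorem expGL_smul_b4_mem_H (t : ℝ) : expGL (t • b4) ∈ H :=
  Subgroup.subset_closure ⟨t, .inr (.inr (.inr (coe_expGL _)))⟩

theorem exists_eq_polarVec_of_mem_B {v : Fin 4 → ℝ} (hv : v ∈ B) :
    ∃ r > 0, ∃ a b : ℝ, v = polarVec r a b := by
  obtain ⟨hv0, hΔ⟩ := hv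
  have hpos : 0 < v 0 ^ 2 + v 1 ^ 2 := by
    by_contra! hle
    refine hv0 (funext fun i => ?_)
    unfold Δsq at hΔ
    fin_cases i <;> simp <;> nlinarith [sq_nonneg (v 0), sq_nonneg (v 1), sq_nonneg (v 2),
      sq_nonneg (v 3)]
  obtain ⟨r, hr, hr2⟩ : ∃ r > 0, v 0 ^ 2 + v 1 ^ 2 = r ^ 2 :=
    ⟨√(v 0 ^ 2 + v 1 ^ 2), Real.sqrt_pos.2 hpos, (Real.sq_sqrt hpos.le).symm⟩
  obtain ⟨a, h0, h1⟩ := Real.exists_eq_mul_cos_and_eq_mul_sin hr.le hr2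
  obtain ⟨b, h2, h3⟩ := Real.exists_eq_mul_cos_and_eq_mul_sin (x := v 2) (y := v 3) hr.le
    (by unfold Δsq at hΔ; linarith)
  refine ⟨r, hr, a, b, funext fun i => ?_⟩
  fin_cases i <;> simp [polarVec, h0, h1, h2, h3]

theorem exists_mem_H_mulVec_eq_polarVec_one {v : Fin 4 → ℝ} (hv : v ∈ B) :
    ∃ g ∈ H, (g : Matrix (Fin 4) (Fin 4) ℝ) *ᵥ v = polarVec 1 0 0 := by
  obtain ⟨r, hr, a, b, rfl⟩ := exists_eq_polarVec_of_mem_B hv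
  refine ⟨expGL (Real.log r • b2) * expGL (((a + b) / 2) • b4) * expGL (((b - a) / 2) • b1),
    mul_mem (mul_mem (expGL_smul_b2_mem_H _) (expGL_smul_b4_mem_H _)) (expGL_smul_b1_mem_H _),
    ?_⟩
  rw [Units.val_mul, Units.val_mul, coe_expGL, coe_expGL, coe_expGL, ← mulVec_mulVec,
    ← mulVec_mulVec, exp_smul_b1_mulVec_polarVec, exp_smul_b4_mulVec_polarVec]
  have ha : a + (b - a) / 2 - (a + b) / 2 = 0 := by ring
  have hb : b - (b - a) / 2 - (a + b) / 2 = 0 := by ring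
  rw [ha, hb, exp_smul_b2_mulVec_polarVec_zero, Real.exp_neg, Real.exp_log hr,
    inv_mul_cancel₀ hr.ne']

/-- `H` acts transitively on the set `B` of single-centered BPS charge vectors. -/
theorem H_transitive_on_B :
    ∀ v ∈ B, ∀ w ∈ B, ∃ g ∈ H, (g : Matrix (Fin 4) (Fin 4) ℝ).mulVec v = w := by
  intro v hv w hw
  obtain ⟨g, hg, hgv⟩ := exists_mem_H_mulVec_eq_polarVec_one hv
  obtain ⟨k, hk, hkw⟩ := exists_mem_H_mulVec_eq_polarVec_one hw
  refine ⟨k⁻¹ * g, mul_mem (inv_mem hk) hg, ?_⟩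
  rw [Units.val_mul, ← mulVec_mulVec, hgv, ← hkw, mulVec_mulVec, Units.inv_mul, one_mulVec]
end
end

section
/- Every element of the one-parameter group {exp(c·(b₁+b₃)) : c ∈ ℝ} fixes the vector (1,1,1,1) ∈ ℝ⁴; the map c ↦ exp(c·(b₁+b₃)) is an injective group homomorphism from (ℝ,+) into GL(4,ℝ); and every x in the real span of {b₁,b₂,b₃,b₄} satisfying x·(1,1,1,1) = 0 is a real scalar multiple of b₁+b₃. (Hence the stabilizer of a diagonal BPS charge vector in K* is a one-parameter subgroup isomorphic to ℝ.) -/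
open Matrix NormedSpace

noncomputable section

/-! The generator `b₁ + b₃` squares to zero, so `exp (c • (b₁ + b₃)) = 1 + c • (b₁ + b₃)`:
the group is a unipotent one-parameter group, which is injective because `b₁ + b₃ ≠ 0` and fixes
`(1,1,1,1)` because `b₁ + b₃` kills it. Conversely, on `a b₁ + b b₂ + c b₃ + d b₄` the condition
`x (1,1,1,1) = 0` is a linear system in `a, b, c, d` forcing `b = d = 0` and `c = a`. -/

theorem exp_eq_one_add_of_mul_self_eq_zero {𝔸 : Type*} [Ring 𝔸] [Algebra ℚ 𝔸]
    [TopologicalSpace 𝔸] [IsTopologicalRing 𝔸] {x : 𝔸} (hx : x * x = 0) : exp x = 1 + x := by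
  have hpow : ∀ n ∉ Finset.range 2, x ^ n = 0 := fun n hn => by
    obtain ⟨k, rfl⟩ := Nat.exists_eq_add_of_le' (not_lt.mp (Finset.mem_range.not.mp hn))
    rw [pow_add, pow_two, hx, mul_zero]
  rw [congrFun (exp_eq_tsum ℚ) x,
    tsum_eq_sum fun n hn => by rw [hpow n hn, smul_zero]]
  simp [Finset.sum_range_succ]

theorem b1_add_b3_mul_self : (b1 + b3) * (b1 + b3) = 0 := by
  ext i j
  fin_cases i <;> fin_cases j <;> simp [b1, b3, Matrix.mul_apply, Fin.sum_univ_four]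

theorem b1_add_b3_ne_zero : b1 + b3 ≠ 0 := fun h => by
  simpa [b1, b3] using congrFun (congrFun h 0) 1

theorem b1_add_b3_mulVec_ones : (b1 + b3) *ᵥ ![1, 1, 1, 1] = 0 := by
  ext i
  fin_cases i <;> simp [b1, b3, Matrix.mulVec, dotProduct, Fin.sum_univ_four]

theorem exp_smul_b1_add_b3 (c : ℝ) : exp (c • (b1 + b3)) = 1 + c • (b1 + b3) := by
  apply exp_eq_one_add_of_mul_self_eq_zero
  rw [smul_mul_smul_comm, b1_add_b3_mul_self, smul_zero]

theorem smul_b_sum_mulVec_ones (a b c d : ℝ) :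
    (a • b1 + (b • b2 + (c • b3 + d • b4))) *ᵥ ![1, 1, 1, 1] =
      ![c + d - a - b, a - b - c - d, a - b - c + d, c - a - b - d] := by
  ext i
  fin_cases i <;> simp [b1, b2, b3, b4, Matrix.mulVec, dotProduct, Fin.sum_univ_four] <;> ring

theorem eq_smul_b1_add_b3_of_mem_span_of_mulVec_ones_eq_zero {x : Matrix (Fin 4) (Fin 4) ℝ}
    (hx : x ∈ Submodule.span ℝ ({b1, b2, b3, b4} : Set (Matrix (Fin 4) (Fin 4) ℝ)))
    (hker : x *ᵥ ![1, 1, 1, 1] = 0) : ∃ c : ℝ, x = c • (b1 + b3) := by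
  simp only [Submodule.mem_span_insert, Submodule.mem_span_singleton] at hx
  obtain ⟨a, _, ⟨b, _, ⟨c, _, ⟨d, rfl⟩, rfl⟩, rfl⟩, rfl⟩ := hx
  rw [smul_b_sum_mulVec_ones] at hker
  have h0 := congrFun hker 0
  have h1 := congrFun hker 1
  have h2 := congrFun hker 2
  simp only [Fin.isValue, Matrix.cons_val, Pi.zero_apply] at h0 h1 h2
  obtain rfl : b = 0 := by linarith
  obtain rfl : d = 0 := by linarith
  obtain rfl : a = c := by linarith
  exact ⟨a, by module⟩

/-- The one-parameter group `exp(c (b₁+b₃))` fixes `(1,1,1,1)`; `c ↦ exp(c (b₁+b₃))` is an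
injective group homomorphism of `(ℝ,+)` into `GL(4,ℝ)` (its values are units, it is
multiplicative, and it is injective); and every `x` in the span of `{b₁,b₂,b₃,b₄}` annihilating
`(1,1,1,1)` is a scalar multiple of `b₁+b₃`. -/
theorem stabilizer_of_diagonal_charge_vector :
    (∀ c : ℝ, (exp (c • (b1 + b3))).mulVec ![1,1,1,1] = ![1,1,1,1]) ∧
    (∀ c : ℝ, IsUnit (exp (c • (b1 + b3)))) ∧
    (∀ c d : ℝ, exp ((c + d) • (b1 + b3)) = exp (c • (b1 + b3)) * exp (d • (b1 + b3))) ∧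
    Function.Injective (fun c : ℝ => exp (c • (b1 + b3))) ∧
    (∀ x ∈ Submodule.span ℝ ({b1, b2, b3, b4} : Set (Matrix (Fin 4) (Fin 4) ℝ)),
      x.mulVec ![1,1,1,1] = 0 → ∃ c : ℝ, x = c • (b1 + b3)) := by
  refine ⟨fun c => ?_, fun c => Matrix.isUnit_exp _, fun c d => ?_, fun c d h => ?_,
    fun x hx hker => eq_smul_b1_add_b3_of_mem_span_of_mulVec_ones_eq_zero hx hker⟩
  · rw [exp_smul_b1_add_b3, add_mulVec, one_mulVec, smul_mulVec, b1_add_b3_mulVec_ones,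
      smul_zero, add_zero]
  · rw [add_smul]
    exact Matrix.exp_add_of_commute _ _ ((Commute.refl _).smul_left c |>.smul_right d)
  · simp only [exp_smul_b1_add_b3, add_right_inj] at h
    exact smul_left_injective ℝ b1_add_b3_ne_zero h
end
end

section
/- The assignment F([x₀ : x₁], [y₀ : y₁]) = [x₀y₀ + x₁y₁ : x₁y₀ − x₀y₁ : x₀y₀ − x₁y₁ : x₀y₁ + x₁y₀] is well defined (independent of the choice of homogeneous representatives, with nonzero image vector) and defines a bijection from ℙ¹(ℝ) × ℙ¹(ℝ) onto the projective quadric PB = {[v] ∈ ℙ(ℝ⁴) : Δ²(v) = 0}. -/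
open Matrix Complex

noncomputable section

/-- The vector of homogeneous coordinates used to define `F`. -/
def Fvec (x y : Fin 2 → ℝ) : Fin 4 → ℝ :=
  ![x 0 * y 0 + x 1 * y 1, x 1 * y 0 - x 0 * y 1, x 0 * y 0 - x 1 * y 1, x 0 * y 1 + x 1 * y 0]

/-- The projectivized BPS quadric `PB ⊆ ℙ(ℝ⁴)`: lines `[v]` with `v ≠ 0` and `Δ²(v) = 0`. -/
def PB : Set (Projectivization ℝ (Fin 4 → ℝ)) :=
  {p | ∃ v : Fin 4 → ℝ, ∃ hv : v ≠ 0, p = Projectivization.mk ℝ v hv ∧ Δsq v = 0}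


/-- identify `ℝ²` with `ℂ`. -/
def toC (x : Fin 2 → ℝ) : ℂ := ⟨x 0, x 1⟩

lemma toC_eq_zero {x : Fin 2 → ℝ} : toC x = 0 ↔ x = 0 := by
  rw [Complex.ext_iff, funext_iff, Fin.forall_fin_two]
  simp [toC]

lemma toC_inj {x y : Fin 2 → ℝ} (h : toC x = toC y) : x = y := by
  rw [Complex.ext_iff] at h
  funext i; fin_cases i
  · exact h.1
  · exact h.2

lemma Fvec_c1 (x y : Fin 2 → ℝ) :
    toC x * (starRingEnd ℂ) (toC y) = ⟨Fvec x y 0, Fvec x y 1⟩ := by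
  apply Complex.ext <;>
    simp [toC, Fvec, Complex.mul_re, Complex.mul_im] <;> ring

lemma Fvec_c2 (x y : Fin 2 → ℝ) :
    toC x * toC y = ⟨Fvec x y 2, Fvec x y 3⟩ := by
  apply Complex.ext <;>
    simp [toC, Fvec, Complex.mul_re, Complex.mul_im] <;> ring

lemma Fvec_ne_zero {x y : Fin 2 → ℝ} (hx : x ≠ 0) (hy : y ≠ 0) : Fvec x y ≠ 0 := by
  intro h
  have h1 : toC x * (starRingEnd ℂ) (toC y) = 0 := by
    rw [Fvec_c1, h]; simp [Complex.ext_iff]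
  rcases mul_eq_zero.1 h1 with h2 | h2
  · exact hx (toC_eq_zero.1 h2)
  · exact hy (toC_eq_zero.1 (by simpa using congrArg (starRingEnd ℂ) h2))

lemma Δsq_Fvec (x y : Fin 2 → ℝ) : Δsq (Fvec x y) = 0 := by
  simp [Δsq, Fvec]; ring

lemma Fvec_smul (a b : ℝ) (x y : Fin 2 → ℝ) :
    Fvec (a • x) (b • y) = (a * b) • Fvec x y := by
  funext i; fin_cases i <;> simp [Fvec] <;> ring


lemma toC_smul (t : ℝ) (y : Fin 2 → ℝ) : toC (t • y) = (t : ℂ) * toC y := by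
  apply Complex.ext <;> simp [toC]

/-- injectivity core -/
lemma Fvec_inj {x y x' y' : Fin 2 → ℝ} (hx : x ≠ 0) (hy : y ≠ 0) (hx' : x' ≠ 0) (hy' : y' ≠ 0)
    (h : Projectivization.mk ℝ (Fvec x y) (Fvec_ne_zero hx hy) =
      Projectivization.mk ℝ (Fvec x' y') (Fvec_ne_zero hx' hy')) :
    Projectivization.mk ℝ x hx = Projectivization.mk ℝ x' hx' ∧
      Projectivization.mk ℝ y hy = Projectivization.mk ℝ y' hy' := by
  obtain ⟨a, ha⟩ := (Projectivization.mk_eq_mk_iff' ℝ _ _ _ _).1 h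
  have e : ∀ i, Fvec x y i = a * Fvec x' y' i := fun i => by
    have := congrFun ha i; simpa using this.symm
  have ha0 : a ≠ 0 := by
    rintro rfl
    apply Fvec_ne_zero hx hy
    funext i; simpa using e i
  set z := toC x with hz; set w := toC y; set z' := toC x'; set w' := toC y'
  have hz0 : z ≠ 0 := fun h0 => hx (toC_eq_zero.1 h0)
  have hw0 : w ≠ 0 := fun h0 => hy (toC_eq_zero.1 h0)
  have hz'0 : z' ≠ 0 := fun h0 => hx' (toC_eq_zero.1 h0)
  have hw'0 : w' ≠ 0 := fun h0 => hy' (toC_eq_zero.1 h0)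
  have h1 : z * (starRingEnd ℂ) w = (a : ℂ) * (z' * (starRingEnd ℂ) w') := by
    rw [Fvec_c1 x y, Fvec_c1 x' y']
    apply Complex.ext <;> simp [Complex.mul_re, Complex.mul_im, e 0, e 1]
  have h2 : z * w = (a : ℂ) * (z' * w') := by
    rw [Fvec_c2 x y, Fvec_c2 x' y']
    apply Complex.ext <;> simp [Complex.mul_re, Complex.mul_im, e 2, e 3]
  have hzz' : z * z' ≠ 0 := mul_ne_zero hz0 hz'0
  have hcross : (z * z') * ((starRingEnd ℂ) w * w') = (z * z') * (w * (starRingEnd ℂ) w') := by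
    linear_combination (z' * w') * h1 - (z' * (starRingEnd ℂ) w') * h2
  have hreal : (starRingEnd ℂ) w * w' = w * (starRingEnd ℂ) w' :=
    mul_left_cancel₀ hzz' hcross
  set c := ((starRingEnd ℂ) w * w').re with hc
  have hcc : ((c : ℂ)) = (starRingEnd ℂ) w * w' := by
    rw [hc]
    apply (Complex.conj_eq_iff_re.1 ?_)
    rw [_root_.map_mul, Complex.conj_conj]; exact hreal.symm
  have hkey : (Complex.normSq w : ℂ) * w' = (c : ℂ) * w := by
    calc (Complex.normSq w : ℂ) * w' = (w * (starRingEnd ℂ) w) * w' := by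
          rw [Complex.mul_conj]
      _ = w * ((starRingEnd ℂ) w * w') := by ring
      _ = w * (c : ℂ) := by rw [hcc]
      _ = (c : ℂ) * w := by ring
  have hnw : Complex.normSq w ≠ 0 := fun h0 => hw0 (Complex.normSq_eq_zero.1 h0)
  have hc0 : c ≠ 0 := by
    intro hceq
    apply hw'0
    have : (Complex.normSq w : ℂ) * w' = 0 := by rw [hkey, hceq]; simp
    rcases mul_eq_zero.1 this with h0 | h0
    · exact absurd (by exact_mod_cast h0) hnw
    · exact h0
  set t : ℝ := c / Complex.normSq w with ht
  have ht0 : t ≠ 0 := div_ne_zero hc0 hnw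
  have hw'w : w' = (t : ℂ) * w := by
    rw [ht]; push_cast
    rw [div_mul_eq_mul_div, eq_div_iff (by exact_mod_cast hnw : (Complex.normSq w : ℂ) ≠ 0)]
    linear_combination hkey
  have hy'y : y' = t • y := toC_inj (by rw [toC_smul]; exact hw'w)
  have hxx' : x = ((a * t) : ℝ) • x' := by
    apply toC_inj
    rw [toC_smul]
    apply mul_right_cancel₀ hw0
    push_cast
    rw [hw'w] at h2
    linear_combination h2
  constructor
  · rw [Projectivization.mk_eq_mk_iff' ℝ _ _ _ _]
    exact ⟨a * t, hxx'.symm⟩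
  · exact ((Projectivization.mk_eq_mk_iff' ℝ _ _ _ _).2 ⟨t, hy'y.symm⟩).symm

/-- surjectivity core -/
lemma Fvec_surj {v : Fin 4 → ℝ} (hv : v ≠ 0) (hd : Δsq v = 0) :
    ∃ x y : Fin 2 → ℝ, ∃ hx : x ≠ 0, ∃ hy : y ≠ 0, Fvec x y = v := by
  set u : ℂ := ⟨v 0, v 1⟩ with hu
  set p : ℂ := ⟨v 2, v 3⟩ with hp
  have hns : Complex.normSq u = Complex.normSq p := by
    simp only [hu, hp, Complex.normSq_mk]
    have := hd; unfold Δsq at this; nlinarith [this]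
  have hp0 : p ≠ 0 := by
    intro h0
    apply hv
    have hu0 : u = 0 := by
      have : Complex.normSq u = 0 := by rw [hns, h0]; simp
      exact Complex.normSq_eq_zero.1 this
    rw [Complex.ext_iff] at h0 hu0
    simp only [hu, hp, Complex.zero_re, Complex.zero_im] at h0 hu0
    funext i; fin_cases i
    · exact hu0.1
    · exact hu0.2
    · exact h0.1
    · exact h0.2
  have hup : u * p ≠ 0 := by
    apply mul_ne_zero _ hp0
    intro h0
    apply hp0
    apply Complex.normSq_eq_zero.1
    rw [← hns, h0]; simp
  obtain ⟨z, hz⟩ := IsAlgClosed.exists_pow_nat_eq (u * p) (two_pos)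
  have hz0 : z ≠ 0 := fun h0 => hup (by rw [← hz, h0]; ring)
  have hnz : Complex.normSq z = Complex.normSq p := by
    have h1 : Complex.normSq z ^ 2 = Complex.normSq p ^ 2 := by
      rw [← map_pow, hz, Complex.normSq_mul, hns]; ring
    nlinarith [Complex.normSq_nonneg z, Complex.normSq_nonneg p,
      sq_nonneg (Complex.normSq z - Complex.normSq p),
      sq_nonneg (Complex.normSq z + Complex.normSq p)]
  set w : ℂ := p / z with hw
  have hzw : z * w = p := by rw [hw, mul_comm]; exact div_mul_cancel₀ p hz0
  have hcz : (starRingEnd ℂ) z ≠ 0 := by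
    intro h0
    apply hz0
    have := congrArg (starRingEnd ℂ) h0
    simpa using this
  have hcw : z * (starRingEnd ℂ) w = u := by
    have h5 : z * (starRingEnd ℂ) p * z = u * (starRingEnd ℂ) z * z := by
      have hzz : z * z = u * p := by rw [← hz]; ring
      calc z * (starRingEnd ℂ) p * z = (z * z) * (starRingEnd ℂ) p := by ring
        _ = u * (p * (starRingEnd ℂ) p) := by rw [hzz]; ring
        _ = u * (Complex.normSq p : ℂ) := by rw [Complex.mul_conj]
        _ = u * (Complex.normSq z : ℂ) := by rw [hnz]
        _ = u * (z * (starRingEnd ℂ) z) := by rw [Complex.mul_conj]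
        _ = u * (starRingEnd ℂ) z * z := by ring
    have h6 : z * (starRingEnd ℂ) p = u * (starRingEnd ℂ) z := mul_right_cancel₀ hz0 h5
    rw [hw, map_div₀, ← mul_div_assoc, div_eq_iff hcz]
    linear_combination h6
  have hw0 : w ≠ 0 := by rw [hw]; exact div_ne_zero hp0 hz0
  set x : Fin 2 → ℝ := ![z.re, z.im] with hxdef
  set y : Fin 2 → ℝ := ![w.re, w.im] with hydef
  have htx : toC x = z := by apply Complex.ext <;> simp [toC, hxdef]
  have hty : toC y = w := by apply Complex.ext <;> simp [toC, hydef]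
  have hx0 : x ≠ 0 := fun h0 => hz0 (by rw [← htx, h0]; exact toC_eq_zero.2 rfl)
  have hy0 : y ≠ 0 := fun h0 => hw0 (by rw [← hty, h0]; exact toC_eq_zero.2 rfl)
  refine ⟨x, y, hx0, hy0, ?_⟩
  have A := Fvec_c1 x y
  rw [htx, hty, hcw] at A
  have B := Fvec_c2 x y
  rw [htx, hty, hzw] at B
  rw [Complex.ext_iff] at A B
  funext i; fin_cases i
  · exact A.1.symm
  · exact A.2.symm
  · exact B.1.symm
  · exact B.2.symm


/-- `F([x₀:x₁],[y₀:y₁]) = [x₀y₀+x₁y₁ : x₁y₀−x₀y₁ : x₀y₀−x₁y₁ : x₀y₁+x₁y₀]` is well defined on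
`ℙ¹(ℝ) × ℙ¹(ℝ)` (in particular the image vector is nonzero) and is a bijection onto `PB`. -/
theorem F_welldefined_and_bijection :
    ∃ F : Projectivization ℝ (Fin 2 → ℝ) × Projectivization ℝ (Fin 2 → ℝ) →
        Projectivization ℝ (Fin 4 → ℝ),
      (∀ (x y : Fin 2 → ℝ) (hx : x ≠ 0) (hy : y ≠ 0),
        ∃ hv : Fvec x y ≠ 0,
          F (Projectivization.mk ℝ x hx, Projectivization.mk ℝ y hy) =
            Projectivization.mk ℝ (Fvec x y) hv) ∧
      Set.BijOn F Set.univ PB := by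
  classical
  -- the map
  set F : Projectivization ℝ (Fin 2 → ℝ) × Projectivization ℝ (Fin 2 → ℝ) →
      Projectivization ℝ (Fin 4 → ℝ) :=
    fun p => Projectivization.mk ℝ (Fvec p.1.rep p.2.rep)
      (Fvec_ne_zero p.1.rep_nonzero p.2.rep_nonzero) with hF
  -- well-definedness
  have hwd : ∀ (x y : Fin 2 → ℝ) (hx : x ≠ 0) (hy : y ≠ 0),
      F (Projectivization.mk ℝ x hx, Projectivization.mk ℝ y hy) =
        Projectivization.mk ℝ (Fvec x y) (Fvec_ne_zero hx hy) := by
    intro x y hx hy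
    obtain ⟨a, ha⟩ := Projectivization.exists_smul_eq_mk_rep ℝ x hx
    obtain ⟨b, hb⟩ := Projectivization.exists_smul_eq_mk_rep ℝ y hy
    rw [hF]
    simp only
    rw [(Projectivization.mk_eq_mk_iff ℝ _ _ _ _)]
    refine ⟨a * b, ?_⟩
    rw [← ha, ← hb]
    simp only [Units.smul_def, Units.val_mul]
    exact (Fvec_smul _ _ _ _).symm
  refine ⟨F, fun x y hx hy => ⟨Fvec_ne_zero hx hy, hwd x y hx hy⟩, ?_, ?_, ?_⟩
  · -- MapsTo
    intro p _
    exact ⟨Fvec p.1.rep p.2.rep, Fvec_ne_zero p.1.rep_nonzero p.2.rep_nonzero, rfl,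
      Δsq_Fvec _ _⟩
  · -- InjOn
    intro p _ q _ hpq
    have hp1 := p.1.mk_rep
    have hp2 := p.2.mk_rep
    have hq1 := q.1.mk_rep
    have hq2 := q.2.mk_rep
    have h' : Projectivization.mk ℝ (Fvec p.1.rep p.2.rep)
        (Fvec_ne_zero p.1.rep_nonzero p.2.rep_nonzero) =
      Projectivization.mk ℝ (Fvec q.1.rep q.2.rep)
        (Fvec_ne_zero q.1.rep_nonzero q.2.rep_nonzero) := hpq
    obtain ⟨e1, e2⟩ := Fvec_inj p.1.rep_nonzero p.2.rep_nonzero q.1.rep_nonzero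
      q.2.rep_nonzero h'
    have : p.1 = q.1 := by rw [← hp1, ← hq1]; exact e1
    have : p.2 = q.2 := by rw [← hp2, ← hq2]; exact e2
    exact Prod.ext ‹p.1 = q.1› ‹p.2 = q.2›
  · -- SurjOn
    intro pt hpt
    obtain ⟨v, hv, hpteq, hΔ⟩ := hpt
    obtain ⟨x, y, hx0, hy0, hFv⟩ := Fvec_surj hv hΔ
    refine ⟨(Projectivization.mk ℝ x hx0, Projectivization.mk ℝ y hy0), trivial, ?_⟩
    rw [hwd x y hx0 hy0, hpteq]
    rw [Projectivization.mk_eq_mk_iff' ℝ _ _ _ _]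
    exact ⟨1, by simp [hFv]⟩
end
end

section
/- For all m,n,q,h ∈ ℝ the charge matrix Q(m,n,q,h) belongs to su(2,1), and tr(Q(m,n,q,h)²) = 2(m² + n² − q² − h²); consequently, if g ∈ SU(2,1) and g·Q(m,n,q,h)·g⁻¹ = Q(m′,n′,q′,h′) for some m′,n′,q′,h′ ∈ ℝ, then m² + n² − q² − h² = m′² + n′² − q′² − h′², i.e. conjugation by SU(2,1) preserves the BPS condition m² + n² = q² + h². -/
open Matrix Complex

noncomputable section

/-- The signature-(2,1) metric `η`. -/
def η : Matrix (Fin 3) (Fin 3) ℂ := !![0,0,-1; 0,1,0; -1,0,0]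

/-- The real Lie algebra `su(2,1) = {X : tr X = 0 and ηX + X†η = 0}` (as a set of matrices,
with the matrix commutator as bracket). -/
def su21 : Set (Matrix (Fin 3) (Fin 3) ℂ) := {X | X.trace = 0 ∧ η * X + Xᴴ * η = 0}

def h4 : Matrix (Fin 3) (Fin 3) ℂ := !![1,0,0; 0,0,0; 0,0,-1]
def h5 : Matrix (Fin 3) (Fin 3) ℂ := !![I,0,0; 0,-2*I,0; 0,0,I]
def e4 : Matrix (Fin 3) (Fin 3) ℂ := !![0,1,0; 0,0,1; 0,0,0]
def e5 : Matrix (Fin 3) (Fin 3) ℂ := !![0,I,0; 0,0,-I; 0,0,0]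
def e45 : Matrix (Fin 3) (Fin 3) ℂ := !![0,0,I; 0,0,0; 0,0,0]
def f4 : Matrix (Fin 3) (Fin 3) ℂ := !![0,0,0; 1,0,0; 0,1,0]
def f5 : Matrix (Fin 3) (Fin 3) ℂ := !![0,0,0; I,0,0; 0,-I,0]
def f45 : Matrix (Fin 3) (Fin 3) ℂ := !![0,0,0; 0,0,0; I,0,0]
/-- The special unitary group `SU(2,1)` (as a set of matrices). -/
def SU21 : Set (Matrix (Fin 3) (Fin 3) ℂ) := {g | g.det = 1 ∧ gᴴ * η * g = η}

/-- The charge matrix `Q(m,n,q,h)`. -/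
def Qc (m n q h : ℝ) : Matrix (Fin 3) (Fin 3) ℂ :=
  (-m : ℝ) • h4 + n • (e45 - f45) - (q / Real.sqrt 2) • (e4 - f4) + (h / Real.sqrt 2) • (e5 + f5)

/-! The quadratic form `X ↦ tr (X²)` is invariant under conjugation by any invertible matrix,
and writing `Q(m,n,q,h)` in terms of `z = (q + h i)/√2` shows that it takes the value
`2 (m² + n² − 2|z|²) = 2 (m² + n² − q² − h²)` on charge matrices. -/

theorem Matrix.trace_conj_pow {n R : Type*} [Fintype n] [DecidableEq n] [CommRing R]
    {g : Matrix n n R} (hg : IsUnit g) (X : Matrix n n R) (k : ℕ) :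
    ((g * X * g⁻¹) ^ k).trace = (X ^ k).trace := by
  rw [← hg.unit_spec, ← coe_units_inv, Units.conj_pow, trace_units_conj]

lemma isUnit_of_mem_SU21 {g : Matrix (Fin 3) (Fin 3) ℂ} (hg : g ∈ SU21) : IsUnit g :=
  (isUnit_iff_isUnit_det g).2 (hg.1 ▸ isUnit_one)

def chargeMatrix (m n : ℝ) (z : ℂ) : Matrix (Fin 3) (Fin 3) ℂ :=
  !![-(m : ℂ), -(starRingEnd ℂ) z, n * I; z, 0, -z; -(n * I), (starRingEnd ℂ) z, m]

lemma Qc_eq_chargeMatrix (m n q h : ℝ) :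
    Qc m n q h = chargeMatrix m n ((q + h * I) / Real.sqrt 2) := by
  ext i j
  fin_cases i <;> fin_cases j <;>
    simp [Qc, chargeMatrix, h4, e4, e5, e45, f4, f5, f45, map_div₀] <;> ring

lemma chargeMatrix_mem_su21 (m n : ℝ) (z : ℂ) : chargeMatrix m n z ∈ su21 := by
  refine ⟨by simp [chargeMatrix, trace_fin_three], ?_⟩
  ext i j
  fin_cases i <;> fin_cases j <;>
    simp [η, chargeMatrix, mul_apply, Fin.sum_univ_three, conjTranspose_apply]

lemma trace_chargeMatrix_sq (m n : ℝ) (z : ℂ) :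
    (chargeMatrix m n z ^ 2).trace = 2 * (m ^ 2 + n ^ 2) - 4 * (normSq z : ℂ) := by
  rw [sq, trace_fin_three, ← mul_conj]
  simp only [chargeMatrix, Fin.isValue, mul_apply, of_apply, cons_val', cons_val_fin_one,
    cons_val_zero, Fin.sum_univ_three, mul_neg, neg_mul, neg_neg, cons_val_one, cons_val,
    mul_zero, add_zero]
  linear_combination (-2 * (n : ℂ) ^ 2) * I_sq

lemma normSq_add_mul_I_div_sqrt_two (q h : ℝ) :
    normSq ((q + h * I) / Real.sqrt 2) = (q ^ 2 + h ^ 2) / 2 := by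
  rw [normSq_div, normSq_add_mul_I, normSq_ofReal, Real.mul_self_sqrt zero_le_two]

lemma Qc_mem_su21 (m n q h : ℝ) : Qc m n q h ∈ su21 :=
  Qc_eq_chargeMatrix m n q h ▸ chargeMatrix_mem_su21 _ _ _

lemma trace_Qc_sq (m n q h : ℝ) :
    (Qc m n q h ^ 2).trace = ((2 * (m ^ 2 + n ^ 2 - q ^ 2 - h ^ 2) : ℝ) : ℂ) := by
  rw [Qc_eq_chargeMatrix, trace_chargeMatrix_sq, normSq_add_mul_I_div_sqrt_two]
  push_cast
  ring

/-- The charge matrix lies in `su(2,1)`, `tr(Q²) = 2(m²+n²−q²−h²)`, and consequently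
conjugation by `SU(2,1)` preserves the BPS condition `m²+n² = q²+h²`. -/
theorem charge_matrix_BPS_invariant :
    (∀ m n q h : ℝ, Qc m n q h ∈ su21) ∧
    (∀ m n q h : ℝ, (Qc m n q h ^ 2).trace = ((2 * (m^2 + n^2 - q^2 - h^2) : ℝ) : ℂ)) ∧
    (∀ m n q h m' n' q' h' : ℝ, ∀ g ∈ SU21,
      g * Qc m n q h * g⁻¹ = Qc m' n' q' h' →
        m^2 + n^2 - q^2 - h^2 = m'^2 + n'^2 - q'^2 - h'^2) := by
  refine ⟨Qc_mem_su21, trace_Qc_sq, ?_⟩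
  intro m n q h m' n' q' h' g hg hconj
  have htrace := trace_conj_pow (isUnit_of_mem_SU21 hg) (Qc m n q h) 2
  rw [hconj, trace_Qc_sq, trace_Qc_sq] at htrace
  linarith [ofReal_injective htrace]
end
end

section
/- For every c, m, n, q, h ∈ ℝ: exp(c·t₂) · Q(m,n,q,h) · exp(−c·t₂) = Q(m cosh c − q sinh c, n cosh c − h sinh c, −m sinh c + q cosh c, −n sinh c + h cosh c); that is, the one-parameter subgroup generated by the non-compact generator t₂ acts on the four charges as a boost mixing the gravitational charges (m,n) with the electromagnetic charges (q,h). -/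
open Matrix Complex

noncomputable section

/-- The non-compact generator `t₂` of `k*`. -/
def t2 : Matrix (Fin 3) (Fin 3) ℂ := (Real.sqrt 2)⁻¹ • (e4 + f4)

open NormedSpace

/-!
Since `t₂` has eigenvalues `0, ±1`, it satisfies `t₂³ = t₂`, so its exponential series collapses to
`exp (c t₂) = 1 + sinh c · t₂ + (cosh c - 1) · t₂²`. The bracket with `t₂` exchanges `(m, n)` and
`(q, h)` up to sign, so `ad t₂` squares to the identity on charge matrices. Together with
`t₂³ = t₂` this forces `t₂ Q t₂ = 0`, and expanding the conjugation of `Q` by the quadratic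
expressions for `exp (±c t₂)` leaves exactly `cosh c · Q + sinh c · [t₂, Q]`.
-/

theorem pow_two_mul_add_one_of_pow_three_eq_self {M : Type*} [Monoid M] {x : M}
    (hx : x ^ 3 = x) (k : ℕ) : x ^ (2 * k + 1) = x := by
  induction k with
  | zero => simp
  | succ k ih => rw [show 2 * (k + 1) + 1 = 2 * k + 1 + 2 by ring, pow_add, ih, ← pow_succ', hx]

theorem exp_smul_of_pow_three_eq_self {𝔸 : Type*} [NormedRing 𝔸] [NormedAlgebra ℝ 𝔸]
    [CompleteSpace 𝔸] {x : 𝔸} (hx : x ^ 3 = x) (t : ℝ) :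
    exp (t • x) = 1 + Real.sinh t • x + (Real.cosh t - 1) • x ^ 2 := by
  have heven (k : ℕ) : x ^ (2 * (k + 1)) = x ^ 2 := by
    rw [show 2 * (k + 1) = 2 * k + 1 + 1 by ring, pow_succ,
      pow_two_mul_add_one_of_pow_three_eq_self hx, sq]
  have hcosh : HasSum (fun k ↦ t ^ (2 * (k + 1)) / (2 * (k + 1)).factorial) (Real.cosh t - 1) := by
    simpa using (hasSum_nat_add_iff' 1).mpr (Real.hasSum_cosh t)
  refine (exp_series_hasSum_exp' (𝕂 := ℝ) (t • x)).unique ?_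
  simp_rw [smul_pow, smul_smul, inv_mul_eq_div, add_right_comm _ _ ((Real.cosh t - 1) • x ^ 2)]
  refine HasSum.even_add_odd ((hasSum_nat_add_iff' 1).mp ?_) ?_
  · simp only [heven, Finset.sum_range_one, mul_zero, pow_zero, Nat.factorial_zero, Nat.cast_one,
      div_one, one_smul, add_sub_cancel_left]
    exact hcosh.smul_const _
  · simp_rw [pow_two_mul_add_one_of_pow_three_eq_self hx]
    exact (Real.hasSum_sinh t).smul_const x

/-- Conjugating `⁅x, ⁅x, y⁆⁆ = y` by `x` gives `xyx = 2 x²yx²` and `x²yx² = 2 xyx`, so `3 xyx = 0`.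
(In characteristic `3` the conclusion fails: `ad x` may then map `y` between the `±1`-eigenspaces
of `x`.) -/
theorem mul_mul_eq_zero_of_lie_lie_eq_self (𝕜 : Type*) {R : Type*} [Field 𝕜] [CharZero 𝕜]
    [Ring R] [Module 𝕜 R] {x y : R} (hx : x ^ 3 = x) (hy : ⁅x, ⁅x, y⁆⁆ = y) : x * y * x = 0 := by
  have hl (z : R) : x * (x * (x * z)) = x * z := by
    rw [← mul_assoc, ← mul_assoc, ← pow_three', hx]
  have hr (z : R) : z * x * x * x = z * x := by rw [mul_assoc, mul_assoc, ← pow_three, hx]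
  set a := x * y * x with ha
  have hconj : a = 2 • a - 2 • (x * a * x) := by
    conv_lhs => rw [ha, ← hy]
    simp only [ha, Ring.lie_def, mul_sub, sub_mul, ← mul_assoc, hr]
    simp only [mul_assoc, hl]
    abel
  have h1 : a = 2 • (x * a * x) := by linear_combination (norm := abel) -hconj
  have h2 : x * a * x = 2 • a := by
    conv_lhs => rw [h1]
    simp only [ha, mul_smul_comm, smul_mul_assoc, ← mul_assoc, hr]
    simp only [mul_assoc, hl]
  have h3 : (3 : 𝕜) • a = 0 := by
    rw [ofNat_smul_eq_nsmul]
    linear_combination (norm := abel) -h1 - 2 • h2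
  exact (smul_eq_zero.mp h3).resolve_left three_ne_zero

theorem conj_quadratic_of_lie_lie_eq_self {𝕜 R : Type*} [Field 𝕜] [CharZero 𝕜] [Ring R]
    [Algebra 𝕜 R] {x y : R} (hx : x ^ 3 = x) (hy : ⁅x, ⁅x, y⁆⁆ = y) (s r : 𝕜) :
    (1 + s • x + r • x ^ 2) * y * (1 - s • x + r • x ^ 2) = (1 + r) • y + s • ⁅x, y⁆ := by
  have hx3 : x * (x * x) = x := by rw [← pow_three, hx]
  have hxyx : x * (y * x) = 0 := by rw [← mul_assoc, mul_mul_eq_zero_of_lie_lie_eq_self 𝕜 hx hy]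
  have hxyxz (z : R) : x * (y * (x * z)) = 0 := by
    rw [← mul_assoc, ← mul_assoc, mul_mul_eq_zero_of_lie_lie_eq_self 𝕜 hx hy, zero_mul]
  have hsq : x * (x * y) = y - y * (x * x) := by
    simp only [Ring.lie_def, mul_sub, sub_mul, mul_assoc, hxyx] at hy
    linear_combination (norm := abel) hy
  simp only [Ring.lie_def, sq, add_mul, mul_add, sub_mul, mul_sub, smul_mul_assoc, mul_smul_comm,
    one_mul, mul_one, mul_assoc, hx3, hxyx, hxyxz, smul_zero, hsq]
  module

theorem exp_smul_mul_mul_exp_neg_smul_of_lie_lie_eq_self {𝔸 : Type*} [NormedRing 𝔸]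
    [NormedAlgebra ℝ 𝔸] [CompleteSpace 𝔸] {x y : 𝔸} (hx : x ^ 3 = x) (hy : ⁅x, ⁅x, y⁆⁆ = y)
    (t : ℝ) : exp (t • x) * y * exp ((-t) • x) = Real.cosh t • y + Real.sinh t • ⁅x, y⁆ := by
  rw [exp_smul_of_pow_three_eq_self hx, exp_smul_of_pow_three_eq_self hx, Real.sinh_neg,
    Real.cosh_neg, neg_smul, ← sub_eq_add_neg, conj_quadratic_of_lie_lie_eq_self hx hy,
    add_sub_cancel]

theorem e4_add_f4_pow_three : (e4 + f4) ^ 3 = (2 : ℝ) • (e4 + f4) := by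
  ext i j
  fin_cases i <;> fin_cases j <;> simp [pow_succ, e4, f4, Matrix.mul_apply, Fin.sum_univ_succ] <;>
    norm_num

theorem t2_pow_three : t2 ^ 3 = t2 := by
  rw [t2, smul_pow, e4_add_f4_pow_three, smul_smul]
  congr 1
  field_simp
  simp

theorem lie_t2_Qc (m n q h : ℝ) : ⁅t2, Qc m n q h⁆ = Qc (-q) (-h) (-m) (-n) := by
  have hs : ((√2 : ℝ) : ℂ) ^ 2 = 2 := by norm_cast; simp
  rw [Ring.lie_def]
  ext i j
  fin_cases i <;> fin_cases j <;>
    simp [t2, Qc, e4, f4, e5, f5, e45, f45, h4] <;>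
    field_simp <;> ring_nf <;> simp only [hs]

theorem Qc_add (m n q h m' n' q' h' : ℝ) :
    Qc m n q h + Qc m' n' q' h' = Qc (m + m') (n + n') (q + q') (h + h') := by
  simp only [Qc]
  match_scalars <;> ring

theorem smul_Qc (a m n q h : ℝ) : a • Qc m n q h = Qc (a * m) (a * n) (a * q) (a * h) := by
  simp only [Qc]
  match_scalars <;> ring

/-- The one-parameter subgroup generated by `t₂` acts on the four charges as a boost mixing
the gravitational charges `(m,n)` with the electromagnetic charges `(q,h)`. -/
theorem t2_boost_action_on_charges :
    ∀ c m n q h : ℝ,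
      NormedSpace.exp (c • t2) * Qc m n q h * NormedSpace.exp ((-c) • t2) =
        Qc (m * Real.cosh c - q * Real.sinh c) (n * Real.cosh c - h * Real.sinh c)
           (-m * Real.sinh c + q * Real.cosh c) (-n * Real.sinh c + h * Real.cosh c) := by
  intro c m n q h
  have hQ : ⁅t2, ⁅t2, Qc m n q h⁆⁆ = Qc m n q h := by simp only [lie_t2_Qc, neg_neg]
  -- the lemma needs a Banach-algebra norm on matrices; any one will do
  open scoped Norms.Operator in
  refine (exp_smul_mul_mul_exp_neg_smul_of_lie_lie_eq_self t2_pow_three hQ c).trans ?_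
  rw [lie_t2_Qc, smul_Qc, smul_Qc, Qc_add]
  congr 1 <;> ring
end
end

section
/- The Weyl group element W := exp(−(π/2)·h₅) · exp((π/2)·(e₄₅ + f₄₅)) equals −η (the matrix with rows (0,0,1),(0,−1,0),(1,0,0)), satisfies W² = I and W ∈ SU(2,1), and realizes the Weyl reflection s_{α₄+α₅}: W e₄ W⁻¹ = −f₄, W f₄ W⁻¹ = −e₄, W e₅ W⁻¹ = f₅, W f₅ W⁻¹ = e₅, W h₄ W⁻¹ = −h₄, and W h₅ W⁻¹ = h₅. -/
open Matrix Complex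

noncomputable section

/-- The Weyl group element `W = exp(−(π/2) h₅) · exp((π/2)(e₄₅ + f₄₅))`. -/
def W : Matrix (Fin 3) (Fin 3) ℂ :=
  NormedSpace.exp ((-(Real.pi/2) : ℝ) • h5) *
    NormedSpace.exp ((Real.pi/2 : ℝ) • (e45 + f45))

/-! `h₅` is diagonal, and `e₄₅ + f₄₅` is diagonalised by the eigenvectors `e₁ + e₃`, `e₂`,
`e₁ - e₃` (eigenvalues `i`, `0`, `-i`), so both exponentials are read off from `exp(±iπ/2) = ±i`
and `exp(iπ) = -1`; their product is `-η`. As `η` is Hermitian with `η² = 1`, every remaining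
claim reduces to the fact that conjugation by `η` reverses both indices of a matrix, with the
sign `(-1)^(i+j)`. -/

open NormedSpace Real

lemma η_mul_self : η * η = 1 := by
  rw [η, mul_fin_three, one_fin_three]
  simp

lemma conjTranspose_η : ηᴴ = η := by
  ext i j; fin_cases i <;> fin_cases j <;> simp [η]

lemma det_η : η.det = -1 := by
  simp [η, det_fin_three]

lemma η_mul_mul_η (X : Matrix (Fin 3) (Fin 3) ℂ) :
    η * X * η = !![X 2 2, -X 2 1, X 2 0; -X 1 2, X 1 1, -X 1 0; X 0 2, -X 0 1, X 0 0] := by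
  rw [η, eta_fin_three X, mul_fin_three, mul_fin_three]
  simp

lemma exp_real_smul_diagonal {m : Type*} [Fintype m] [DecidableEq m] (t : ℝ) (d : m → ℂ) :
    exp (t • diagonal d) = diagonal fun i => Complex.exp (t * d i) := by
  rw [← diagonal_smul, exp_diagonal, Pi.exp_def]
  simp [Complex.exp_eq_exp_ℂ]

lemma exp_smul_h5 : exp ((-(π / 2) : ℝ) • h5) = diagonal ![-I, -1, -I] := by
  rw [show h5 = diagonal ![I, -2 * I, I] by rw [diagonal_vec3, h5], exp_real_smul_diagonal]
  congr 1
  ext i; fin_cases i <;> simp [Complex.exp_neg, show (π : ℂ) / 2 * (2 * I) = π * I by ring]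

def eigenbasis45 : Matrix (Fin 3) (Fin 3) ℂ := !![1,0,1; 0,1,0; 1,0,-1]

lemma eigenbasis45_mul : eigenbasis45 * !![1/2,0,1/2; 0,1,0; 1/2,0,-1/2] = 1 := by
  rw [eigenbasis45, mul_fin_three, one_fin_three]
  norm_num

lemma isUnit_eigenbasis45 : IsUnit eigenbasis45 :=
  (isUnit_iff_isUnit_det _).2 (isUnit_det_of_right_inverse eigenbasis45_mul)

lemma e45_add_f45_eq_conj :
    e45 + f45 = eigenbasis45 * diagonal ![I, 0, -I] * eigenbasis45⁻¹ := by
  rw [inv_eq_right_inv eigenbasis45_mul, eigenbasis45, diagonal_vec3, mul_fin_three,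
    mul_fin_three, e45, f45]
  ext i j; fin_cases i <;> fin_cases j <;> simp <;> ring

lemma exp_smul_e45_add_f45 : exp ((π / 2 : ℝ) • (e45 + f45)) = !![0,0,I; 0,1,0; I,0,0] := by
  rw [e45_add_f45_eq_conj, ← Matrix.smul_mul, ← Matrix.mul_smul,
    exp_conj _ _ isUnit_eigenbasis45, exp_real_smul_diagonal, inv_eq_right_inv eigenbasis45_mul,
    diagonal_fin_three, eigenbasis45, mul_fin_three, mul_fin_three]
  ext i j; fin_cases i <;> fin_cases j <;> simp [Complex.exp_neg] <;> ring

lemma W_eq : W = !![0,0,1; 0,-1,0; 1,0,0] := by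
  rw [W, exp_smul_h5, exp_smul_e45_add_f45, diagonal_vec3, mul_fin_three]
  simp

lemma W_eq_neg_η : W = -η := by
  rw [W_eq, η]
  simp

lemma W_mul_self : W * W = 1 := by
  rw [W_eq_neg_η, neg_mul_neg, η_mul_self]

lemma inv_W : W⁻¹ = W := inv_eq_left_inv W_mul_self

lemma det_W : W.det = 1 := by
  rw [W_eq_neg_η, det_neg, det_η]
  norm_num

lemma conjTranspose_W_mul_η_mul_W : Wᴴ * η * W = η := by
  rw [W_eq_neg_η, conjTranspose_neg, conjTranspose_η, neg_mul, neg_mul_neg, η_mul_self, one_mul]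

lemma W_mul_mul_inv_W (X : Matrix (Fin 3) (Fin 3) ℂ) : W * X * W⁻¹ = η * X * η := by
  rw [inv_W, W_eq_neg_η, neg_mul, neg_mul_neg]

/-- `W = −η`, `W² = 1`, `W ∈ SU(2,1)`, and `W` realizes the Weyl reflection
`s_{α₄+α₅}` on the generators. -/
theorem weyl_element_properties :
    W = -η ∧
    W = !![0,0,1; 0,-1,0; 1,0,0] ∧
    W * W = 1 ∧
    W.det = 1 ∧ Wᴴ * η * W = η ∧
    W * e4 * W⁻¹ = -f4 ∧
    W * f4 * W⁻¹ = -e4 ∧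
    W * e5 * W⁻¹ = f5 ∧
    W * f5 * W⁻¹ = e5 ∧
    W * h4 * W⁻¹ = -h4 ∧
    W * h5 * W⁻¹ = h5 := by
  refine ⟨W_eq_neg_η, W_eq, W_mul_self, det_W, conjTranspose_W_mul_η_mul_W, ?_⟩
  simp only [W_mul_mul_inv_W, η_mul_mul_η]
  refine ⟨?_, ?_, ?_, ?_, ?_, ?_⟩ <;> simp [e4, f4, e5, f5, h4, h5]
end
end
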